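/- (GHZ sculpting operator generates the N-partite GHZ state.) Let N ≥ 2 and consider modes indexed by j ∈ ZMod N, each with internal levels + and − (variables X_{j,±}). Then applying the operator ∏_{j ∈ ZMod N} ( a_{j,0} − a_{j+1,1} ) to the initial state ∏_{j ∈ ZMod N} X_{j,+}X_{j,−} yields ∏_j a†_{j,0}·1 + ∏_j a†_{j,1}·1 = 2^{−N/2}·[ ∏_{j}(X_{j,+}+X_{j,−}) + ∏_{j}(X_{j,+}−X_{j,−}) ], which encodes the N-qubit GHZ state |0…0⟩ + |1…1⟩. -/

import Mathlib

/-! Write each factor as `(√2)⁻¹ (B_j + C_{j+1})`, where `B_k = ∂_{k,+} + ∂_{k,−}` and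
`C_k = ∂_{k,−} − ∂_{k,+}` are commuting derivations that only see mode `k`. Expanding the product
gives a sum over `S ⊆ ZMod N` of `∏_{j ∈ S} B_j ∏_{j ∉ S} C_{j+1}`, which acts on
`∏_k X_{k,+} X_{k,−}` mode by mode: `B_k` turns the factor into `X_{k,+} + X_{k,−}`, `C_k` into
`X_{k,+} − X_{k,−}`, and `B_k C_k` kills it. Unless `S` is disjoint from `Sᶜ + 1`, some mode is hit
by both; disjointness makes `Sᶜ` invariant under `k ↦ k + 1`, so only `S = ∅` and `S = ZMod N`
survive, and they give the two branches of the GHZ state. -/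

open MvPolynomial

/-- Partial derivatives on a multivariate polynomial ring commute. -/
lemma pderiv_comm' {σ : Type*} (i j : σ) (p : MvPolynomial σ ℂ) :
    pderiv i (pderiv j p) = pderiv j (pderiv i p) := by
  induction p using MvPolynomial.induction_on with
  | C a => simp
  | add p q hp hq => simp [hp, hq]
  | mul_X p n hp => classical
                  simp only [pderiv_mul, pderiv_X, map_add, hp, Pi.single_apply, apply_ite,
                    map_one, map_zero, mul_ite, ite_mul, mul_one, one_mul, mul_zero, zero_mul]
                  split <;> split <;> ring

/-- The sculpting operator factor `a_{j,0} − a_{j+1,1}` acting on the Bargmann–Fock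
space of `N` modes, each with internal levels `+` (second index `0`) and `−`
(second index `1`): `a_{j,0} = (a_{j,+} + a_{j,−})/√2`, `a_{j,1} = (a_{j,+} − a_{j,−})/√2`,
with annihilation operators realized as partial derivatives. -/
noncomputable def sculptGHZ (N : ℕ) (j : ZMod N) :
    Module.End ℂ (MvPolynomial (ZMod N × Fin 2) ℂ) :=
  (Real.sqrt 2 : ℂ)⁻¹ •
    (((pderiv ((j, 0) : ZMod N × Fin 2)).toLinearMap +
        (pderiv ((j, 1) : ZMod N × Fin 2)).toLinearMap) -
      ((pderiv ((j + 1, 0) : ZMod N × Fin 2)).toLinearMap -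
        (pderiv ((j + 1, 1) : ZMod N × Fin 2)).toLinearMap))

/-- The factors of the GHZ sculpting operator are commuting operators (they are
constant-coefficient differential operators), so their product is well defined. -/
lemma sculptGHZ_commute (N : ℕ) (j k : ZMod N) :
    Commute (sculptGHZ N j) (sculptGHZ N k) := by
  have hd : ∀ x y : ZMod N × Fin 2,
      Commute ((pderiv x).toLinearMap : Module.End ℂ (MvPolynomial (ZMod N × Fin 2) ℂ))
        (pderiv y).toLinearMap := by
    intro x y
    refine LinearMap.ext fun p => ?_
    simpa [Module.End.mul_apply] using pderiv_comm' x y p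
  have hA : ∀ (a : ZMod N) (y : ZMod N × Fin 2),
      Commute (((pderiv ((a, 0) : ZMod N × Fin 2)).toLinearMap +
          (pderiv ((a, 1) : ZMod N × Fin 2)).toLinearMap) -
        ((pderiv ((a + 1, 0) : ZMod N × Fin 2)).toLinearMap -
          (pderiv ((a + 1, 1) : ZMod N × Fin 2)).toLinearMap))
        ((pderiv y).toLinearMap : Module.End ℂ (MvPolynomial (ZMod N × Fin 2) ℂ)) := fun a y =>
    ((hd _ y).add_left (hd _ y)).sub_left ((hd _ y).sub_left (hd _ y))
  have hAA : Commute
      (((pderiv ((j, 0) : ZMod N × Fin 2)).toLinearMap +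
          (pderiv ((j, 1) : ZMod N × Fin 2)).toLinearMap) -
        ((pderiv ((j + 1, 0) : ZMod N × Fin 2)).toLinearMap -
          (pderiv ((j + 1, 1) : ZMod N × Fin 2)).toLinearMap))
      (((pderiv ((k, 0) : ZMod N × Fin 2)).toLinearMap +
          (pderiv ((k, 1) : ZMod N × Fin 2)).toLinearMap) -
        ((pderiv ((k + 1, 0) : ZMod N × Fin 2)).toLinearMap -
          (pderiv ((k + 1, 1) : ZMod N × Fin 2)).toLinearMap)) :=
    ((hA j _).add_right (hA j _)).sub_right ((hA j _).sub_right (hA j _))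
  exact (hAA.smul_left ((Real.sqrt 2 : ℂ)⁻¹)).smul_right ((Real.sqrt 2 : ℂ)⁻¹)

open Finset
open scoped IsMulCommutative

theorem Subalgebra.coe_prod_of_isMulCommutative {R B ι : Type*} [CommSemiring R] [Ring B]
    [Algebra R B] (𝒜 : Subalgebra R B) [IsMulCommutative 𝒜] (s : Finset ι) (x : ι → 𝒜) :
    ((∏ i ∈ s, x i : 𝒜) : B) = s.noncommProd (fun i => (x i : B))
      (fun i _ j _ _ => (Commute.all (x i) (x j)).map 𝒜.val) := by
  rw [← noncommProd_eq_prod]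
  exact map_noncommProd s x _ 𝒜.val

section LocalDerivations

variable {R A ι : Type*} [CommSemiring R] [CommSemiring A] [Algebra R A] [DecidableEq ι]

theorem Derivation.map_prod_eq_zero (D : Derivation R A A) {s : Finset ι} {f : ι → A}
    (h : ∀ i ∈ s, D (f i) = 0) : D (∏ i ∈ s, f i) = 0 := by
  induction s using Finset.induction_on with
  | empty => simp
  | insert a s ha ih =>
    rw [prod_insert ha, D.leibniz, h a (mem_insert_self a s),
      ih fun i hi => h i (mem_insert_of_mem hi), smul_zero, smul_zero, add_zero]

theorem Derivation.map_prod_eq_prod_update [Fintype ι] (D : Derivation R A A) (f : ι → A) (a : ι)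
    (h : ∀ i ≠ a, D (f i) = 0) : D (∏ i, f i) = ∏ i, Function.update f a (D (f a)) i := by
  rw [← mul_prod_erase univ f (mem_univ a), D.leibniz,
    D.map_prod_eq_zero fun i hi => h i (ne_of_mem_erase hi), smul_zero, zero_add, smul_eq_mul,
    prod_update_of_mem (mem_univ a), sdiff_singleton_eq_erase, mul_comm]

theorem Derivation.prod_apply_prod_eq_prod_ite [Fintype ι] (𝒜 : Subalgebra R (Module.End R A))
    [IsMulCommutative 𝒜] (D : ι → Derivation R A A) (x : ι → 𝒜)
    (hx : ∀ i, (x i : Module.End R A) = D i) (f : ι → A) (hf : ∀ i j, j ≠ i → D j (f i) = 0)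
    (S : Finset ι) :
    ((∏ i ∈ S, x i : 𝒜) : Module.End R A) (∏ i, f i) =
      ∏ i, if i ∈ S then D i (f i) else f i := by
  induction S using Finset.induction_on with
  | empty => simp
  | insert a S ha ih =>
    have hcomm : ∀ i j, D j (D i (f i)) = D i (D j (f i)) := fun i j => by
      simpa [hx] using LinearMap.congr_fun (congrArg Subtype.val (mul_comm (x j) (x i))) (f i)
    rw [prod_insert ha, MulMemClass.coe_mul, Module.End.mul_apply, ih, hx,
      Derivation.coeFn_coe, D a |>.map_prod_eq_prod_update _ a fun i hi => ?_]
    · congr 1 with i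
      rcases eq_or_ne i a with rfl | hi
      · simp [ha]
      · simp [hi]
    · split_ifs
      · rw [hcomm, hf i a hi.symm, map_zero]
      · exact hf i a hi.symm

end LocalDerivations

noncomputable section DiffOperators

variable (σ : Type*)

def diffOperators : Subalgebra ℂ (Module.End ℂ (MvPolynomial σ ℂ)) :=
  Algebra.adjoin ℂ (Set.range fun v : σ => (pderiv v).toLinearMap)

instance : IsMulCommutative (diffOperators σ) :=
  Algebra.isMulCommutative_adjoin ℂ <| by
    rintro _ ⟨u, rfl⟩ _ ⟨v, rfl⟩
    exact LinearMap.ext (pderiv_comm' u v)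

variable {σ}

theorem pderiv_mem_diffOperators (v : σ) :
    ((pderiv v).toLinearMap : Module.End ℂ (MvPolynomial σ ℂ)) ∈ diffOperators σ :=
  Algebra.subset_adjoin ⟨v, rfl⟩

end DiffOperators

noncomputable section Modes

variable {R ι : Type*} [CommRing R]

def modePair (k : ι) : MvPolynomial (ι × Fin 2) R := X (k, 0) * X (k, 1)

def modeSum (k : ι) : MvPolynomial (ι × Fin 2) R := X (k, 0) + X (k, 1)

def modeDiff (k : ι) : MvPolynomial (ι × Fin 2) R := X (k, 0) - X (k, 1)

/- In the notation of the paper, `sumDeriv k = √2 a_{k,0}` and `diffDeriv k = -√2 a_{k,1}`, while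
`modeSum k` and `modeDiff k` are `√2 a†_{k,0}·1` and `√2 a†_{k,1}·1`. -/
def sumDeriv (k : ι) : Derivation R (MvPolynomial (ι × Fin 2) R) (MvPolynomial (ι × Fin 2) R) :=
  pderiv (k, 0) + pderiv (k, 1)

def diffDeriv (k : ι) : Derivation R (MvPolynomial (ι × Fin 2) R) (MvPolynomial (ι × Fin 2) R) :=
  pderiv (k, 1) - pderiv (k, 0)

theorem sumDeriv_modePair (k : ι) :
    sumDeriv k (modePair k : MvPolynomial (ι × Fin 2) R) = modeSum k := by
  simp [sumDeriv, modePair, modeSum, add_comm]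

theorem diffDeriv_modePair (k : ι) :
    diffDeriv k (modePair k : MvPolynomial (ι × Fin 2) R) = modeDiff k := by
  simp [diffDeriv, modePair, modeDiff, sub_eq_add_neg]

theorem sumDeriv_modeDiff (k : ι) : sumDeriv k (modeDiff k : MvPolynomial (ι × Fin 2) R) = 0 := by
  simp [sumDeriv, modeDiff]

end Modes

noncomputable section SculptingTerms

variable {ι : Type*}

def sumOp (k : ι) : diffOperators (ι × Fin 2) :=
  ⟨(sumDeriv k).toLinearMap, add_mem (pderiv_mem_diffOperators _) (pderiv_mem_diffOperators _)⟩

def diffOp (k : ι) : diffOperators (ι × Fin 2) :=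
  ⟨(diffDeriv k).toLinearMap, sub_mem (pderiv_mem_diffOperators _) (pderiv_mem_diffOperators _)⟩

theorem prod_sumOp_mul_prod_diffOp_apply [Fintype ι] [DecidableEq ι] (S T : Finset ι) :
    (((∏ i ∈ S, sumOp i) * ∏ i ∈ T, diffOp i : diffOperators (ι × Fin 2)) :
        Module.End ℂ (MvPolynomial (ι × Fin 2) ℂ)) (∏ k, modePair k) =
      ∏ k, if k ∈ S then (if k ∈ T then 0 else modeSum k)
        else (if k ∈ T then modeDiff k else modePair k) := by
  rw [MulMemClass.coe_mul, Module.End.mul_apply,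
    Derivation.prod_apply_prod_eq_prod_ite _ diffDeriv diffOp (fun _ => rfl) modePair
      (fun i j h => by simp [diffDeriv, modePair, h]) T,
    Derivation.prod_apply_prod_eq_prod_ite _ sumDeriv sumOp (fun _ => rfl) _ (fun i j h => ?_) S]
  · refine prod_congr rfl fun k _ => ?_
    split_ifs <;> simp [sumDeriv_modePair, diffDeriv_modePair, sumDeriv_modeDiff]
  · split_ifs
    · simp [diffDeriv_modePair, sumDeriv, modeDiff, h]
    · simp [sumDeriv, modePair, h]

end SculptingTerms

theorem sculptGHZ_eq_smul_sumOp_add_diffOp (N : ℕ) (j : ZMod N) :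
    sculptGHZ N j = ((Real.sqrt 2 : ℂ)⁻¹ • (sumOp j + diffOp (j + 1)) : diffOperators _) := by
  rw [Subalgebra.coe_smul, Subalgebra.coe_add, sculptGHZ]
  change _ = _ • ((sumDeriv j).toLinearMap + (diffDeriv (j + 1)).toLinearMap)
  rw [sumDeriv, diffDeriv, Derivation.coe_add_linearMap, Derivation.coe_sub_linearMap,
    sub_eq_add_neg _ (_ - _), neg_sub]

section Cyclic

variable {N : ℕ} [NeZero N]

theorem ZMod.eq_empty_or_eq_univ_of_forall_add_one_mem {F : Finset (ZMod N)}
    (h : ∀ x ∈ F, x + 1 ∈ F) : F = ∅ ∨ F = univ := by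
  refine F.eq_empty_or_nonempty.imp id fun ⟨x, hx⟩ => eq_univ_iff_forall.2 fun y => ?_
  have hxn : ∀ n : ℕ, x + n ∈ F := by
    intro n
    induction n with
    | zero => simpa using hx
    | succ n ih => simpa [add_assoc] using h _ ih
  simpa using hxn (y - x).val

theorem ZMod.eq_empty_or_eq_univ_of_disjoint_map_compl {S : Finset (ZMod N)}
    (h : Disjoint S (Sᶜ.map (addRightEmbedding 1))) : S = ∅ ∨ S = univ := by
  have hcompl : ∀ x ∈ Sᶜ, x + 1 ∈ Sᶜ := fun x hx =>
    mem_compl.2 fun hS => disjoint_left.1 h hS (mem_map_of_mem _ hx)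
  rcases eq_empty_or_eq_univ_of_forall_add_one_mem hcompl with h | h
  · exact Or.inr ((compl_eq_empty_iff S).1 h)
  · exact Or.inl ((compl_eq_univ_iff S).1 h)

end Cyclic

theorem sum_prod_sumOp_mul_prod_diffOp_apply (N : ℕ) [NeZero N] :
    ((∑ S : Finset (ZMod N), (∏ i ∈ S, sumOp i) * ∏ i ∈ Sᶜ, diffOp (i + 1) :
        diffOperators (ZMod N × Fin 2)) : Module.End ℂ (MvPolynomial (ZMod N × Fin 2) ℂ))
      (∏ k, modePair k) = ∏ k, modeSum k + ∏ k, modeDiff k := by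
  have hterm (S : Finset (ZMod N)) :
      (((∏ i ∈ S, sumOp i) * ∏ i ∈ Sᶜ, diffOp (i + 1) : diffOperators (ZMod N × Fin 2)) :
        Module.End ℂ (MvPolynomial (ZMod N × Fin 2) ℂ)) (∏ k, modePair k) =
      ∏ k, if k ∈ S then (if k ∈ Sᶜ.map (addRightEmbedding 1) then 0 else modeSum k)
        else (if k ∈ Sᶜ.map (addRightEmbedding 1) then modeDiff k else modePair k) := by
    rw [← prod_sumOp_mul_prod_diffOp_apply, prod_map]
    rfl
  rw [AddSubmonoidClass.coe_finsetSum, LinearMap.sum_apply,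
    Fintype.sum_eq_add univ ∅ univ_nonempty.ne_empty fun S hS => ?_, hterm, hterm]
  · simp
  · rw [hterm]
    obtain ⟨k, hkS, hkT⟩ := not_disjoint_iff.1 fun h =>
      (ZMod.eq_empty_or_eq_univ_of_disjoint_map_compl h).elim hS.2 hS.1
    exact prod_eq_zero (mem_univ k) (by simp [hkS, hkT])

theorem noncommProd_sculptGHZ_apply (N : ℕ) [NeZero N] :
    (univ.noncommProd (sculptGHZ N) fun j _ k _ _ => sculptGHZ_commute N j k) (∏ k, modePair k) =
      ((Real.sqrt 2 : ℂ) ^ N)⁻¹ • (∏ k, modeSum k + ∏ k, modeDiff k) := by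
  have hprod : univ.noncommProd (sculptGHZ N) (fun j _ k _ _ => sculptGHZ_commute N j k) =
      ((∏ j : ZMod N, (Real.sqrt 2 : ℂ)⁻¹ • (sumOp j + diffOp (j + 1)) :
        diffOperators (ZMod N × Fin 2)) : Module.End ℂ _) := by
    rw [Subalgebra.coe_prod_of_isMulCommutative]
    exact noncommProd_congr rfl (fun j _ => sculptGHZ_eq_smul_sumOp_add_diffOp N j) _
  rw [hprod, ← smul_prod, Fintype.prod_add, card_univ, ZMod.card, Subalgebra.coe_smul,
    LinearMap.smul_apply, sum_prod_sumOp_mul_prod_diffOp_apply, inv_pow]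

theorem sculpting_GHZ_state_general (N : ℕ) [NeZero N] :
    (Finset.univ.noncommProd (fun j : ZMod N => sculptGHZ N j)
        (fun j _ k _ _ => sculptGHZ_commute N j k))
      (∏ j : ZMod N, (X ((j, 0) : ZMod N × Fin 2) * X ((j, 1) : ZMod N × Fin 2))) =
      ((∏ j : ZMod N, (Real.sqrt 2 : ℂ)⁻¹ •
          (X ((j, 0) : ZMod N × Fin 2) + X ((j, 1) : ZMod N × Fin 2))) +
        ∏ j : ZMod N, (Real.sqrt 2 : ℂ)⁻¹ •
          (X ((j, 0) : ZMod N × Fin 2) - X ((j, 1) : ZMod N × Fin 2))) ∧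
    (∏ j : ZMod N, (Real.sqrt 2 : ℂ)⁻¹ •
          ((X ((j, 0) : ZMod N × Fin 2) : MvPolynomial (ZMod N × Fin 2) ℂ) +
            X ((j, 1) : ZMod N × Fin 2))) +
        (∏ j : ZMod N, (Real.sqrt 2 : ℂ)⁻¹ •
          ((X ((j, 0) : ZMod N × Fin 2) : MvPolynomial (ZMod N × Fin 2) ℂ) -
            X ((j, 1) : ZMod N × Fin 2))) =
      (((Real.sqrt 2 : ℂ) ^ N)⁻¹ •
        ((∏ j : ZMod N, (X ((j, 0) : ZMod N × Fin 2) + X ((j, 1) : ZMod N × Fin 2))) +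
          ∏ j : ZMod N, (X ((j, 0) : ZMod N × Fin 2) - X ((j, 1) : ZMod N × Fin 2)))) := by
  have hscale (f : ZMod N → MvPolynomial (ZMod N × Fin 2) ℂ) :
      ∏ j, (Real.sqrt 2 : ℂ)⁻¹ • f j = ((Real.sqrt 2 : ℂ) ^ N)⁻¹ • ∏ j, f j := by
    rw [← smul_prod, card_univ, ZMod.card, inv_pow]
  have hsum := smul_add ((Real.sqrt 2 : ℂ) ^ N)⁻¹
    (∏ j : ZMod N, (modeSum j : MvPolynomial (ZMod N × Fin 2) ℂ)) (∏ j, modeDiff j)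
  rw [hscale, hscale]
  exact ⟨(noncommProd_sculptGHZ_apply N).trans hsum, hsum.symm⟩

/-- (GHZ sculpting operator generates the `N`-partite GHZ state.)  Applying
`∏_{j ∈ ZMod N} (a_{j,0} − a_{j+1,1})` to `∏_j X_{j,+} X_{j,−}` yields
`∏_j a†_{j,0}·1 + ∏_j a†_{j,1}·1 = 2^{−N/2}·[∏_j (X_{j,+}+X_{j,−}) + ∏_j (X_{j,+}−X_{j,−})]`,
which encodes the `N`-qubit GHZ state `|0…0⟩ + |1…1⟩`. -/
theorem sculpting_GHZ_state (N : ℕ) (hN : 2 ≤ N) [NeZero N] :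
    (Finset.univ.noncommProd (fun j : ZMod N => sculptGHZ N j)
        (fun j _ k _ _ => sculptGHZ_commute N j k))
      (∏ j : ZMod N, (X ((j, 0) : ZMod N × Fin 2) * X ((j, 1) : ZMod N × Fin 2))) =
      ((∏ j : ZMod N, (Real.sqrt 2 : ℂ)⁻¹ •
          (X ((j, 0) : ZMod N × Fin 2) + X ((j, 1) : ZMod N × Fin 2))) +
        ∏ j : ZMod N, (Real.sqrt 2 : ℂ)⁻¹ •
          (X ((j, 0) : ZMod N × Fin 2) - X ((j, 1) : ZMod N × Fin 2))) ∧
    (∏ j : ZMod N, (Real.sqrt 2 : ℂ)⁻¹ •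
          ((X ((j, 0) : ZMod N × Fin 2) : MvPolynomial (ZMod N × Fin 2) ℂ) +
            X ((j, 1) : ZMod N × Fin 2))) +
        (∏ j : ZMod N, (Real.sqrt 2 : ℂ)⁻¹ •
          ((X ((j, 0) : ZMod N × Fin 2) : MvPolynomial (ZMod N × Fin 2) ℂ) -
            X ((j, 1) : ZMod N × Fin 2))) =
      (((Real.sqrt 2 : ℂ) ^ N)⁻¹ •
        ((∏ j : ZMod N, (X ((j, 0) : ZMod N × Fin 2) + X ((j, 1) : ZMod N × Fin 2))) +
          ∏ j : ZMod N, (X ((j, 0) : ZMod N × Fin 2) - X ((j, 1) : ZMod N × Fin 2)))) :=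
  sculpting_GHZ_state_general N
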